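/- Let A ∈ ℂ^{m×d} with [Re(A); Im(A)] ∈ ℝ^{2m×d} of full column rank d, and let x ∈ ℝ^d be nonzero. Define D_{A,ℝ}(x) = [[Re A, Re(dg(Ax))], [Im A, Im(dg(Ax))]] ∈ ℝ^{2m×(m+d)}. Then x ∈ W_{A,ℝ} if and only if rank(D_{A,ℝ}(x)) = d + |N(Ax)| - 1, where W_{A,ℝ} = {x ∈ ℝ^d : for all y ∈ ℝ^d, sign(Ay) = sign(Ax) implies y = t·x for some t > 0}. -/

import Mathlib

attribute [local instance] Classical.propDecidable

noncomputable def csign (z : ℂ) : ℂ := if z = 0 then 0 else z / ((‖z‖ : ℝ) : ℂ)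

/-- Real signals recoverable (up to positive scaling) from the phases of `Ax`. -/
def WsetR {m d : ℕ} (A : Matrix (Fin m) (Fin d) ℂ) : Set (Fin d → ℝ) :=
  {x | ∀ y : Fin d → ℝ,
    (∀ j, csign (A.mulVec (fun k => (y k : ℂ)) j) = csign (A.mulVec (fun k => (x k : ℂ)) j)) →
      ∃ t : ℝ, 0 < t ∧ y = t • x}

/-- The real discriminant matrix `D_{A,ℝ}(x) = [[Re A, Re(dg(Ax))], [Im A, Im(dg(Ax))]]`. -/
noncomputable def discDR {m d : ℕ} (A : Matrix (Fin m) (Fin d) ℂ) (x : Fin d → ℝ) :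
    Matrix (Fin m ⊕ Fin m) (Fin d ⊕ Fin m) ℝ :=
  Matrix.fromBlocks
    (A.map Complex.re) (Matrix.diagonal fun j => (A.mulVec (fun k => (x k : ℂ)) j).re)
    (A.map Complex.im) (Matrix.diagonal fun j => (A.mulVec (fun k => (x k : ℂ)) j).im)


/-!
Write `u = Ax`. A vector `(y, s)` lies in `ker D_{A,ℝ}(x)` iff `Ay = -s ⊙ u`. The vectors
`(x, -1)` and `e_j` for `u_j = 0` always lie in the kernel and are linearly independent, so
`dim ker D ≥ 1 + (m - |N(Ax)|)`, with equality iff every kernel vector `(y, s)` has `y ∈ ℝx`.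
If `Ay = s ⊙ u` with `s` real, then `A(x + εy) = (1 + εs) ⊙ u` has the phases of `Ax` for
small `ε > 0`, so `x ∈ W` forces `y ∈ ℝx`; conversely, equal phases mean `Ay = t ⊙ u` with
`t > 0`. Rank–nullity turns the dimension count into the rank formula, and full column rank
of `[Re A; Im A]` gives `Ax ≠ 0`, i.e. `|N(Ax)| ≥ 1`.
-/

open Matrix Complex

theorem csign_eq_zero_iff {z : ℂ} : csign z = 0 ↔ z = 0 := by
  unfold csign
  split_ifs with hz <;> simp [hz]

theorem csign_ofReal_mul {t : ℝ} (ht : 0 < t) (z : ℂ) : csign (t * z) = csign z := by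
  have ht' : (t : ℂ) ≠ 0 := ofReal_ne_zero.2 ht.ne'
  by_cases hz : z = 0
  · simp [hz]
  · rw [csign, csign, if_neg (mul_ne_zero ht' hz), if_neg hz, norm_mul, norm_real,
      Real.norm_of_nonneg ht.le, ofReal_mul, mul_div_mul_left _ _ ht']

theorem csign_eq_csign_iff {z w : ℂ} :
    csign z = csign w ↔ ∃ t : ℝ, 0 < t ∧ z = t * w := by
  refine ⟨fun h => ?_, fun ⟨t, ht, hzw⟩ => hzw ▸ csign_ofReal_mul ht w⟩
  by_cases hw : w = 0
  · have hz : z = 0 := csign_eq_zero_iff.1 (h.trans (csign_eq_zero_iff.2 hw))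
    exact ⟨1, one_pos, by simp [hz, hw]⟩
  have hz : z ≠ 0 := fun hz => hw (csign_eq_zero_iff.1 (h.symm.trans (csign_eq_zero_iff.2 hz)))
  refine ⟨‖z‖ / ‖w‖, by positivity, ?_⟩
  rw [csign, csign, if_neg hz, if_neg hw] at h
  have hnz : ((‖z‖ : ℝ) : ℂ) ≠ 0 := ofReal_ne_zero.2 (norm_ne_zero_iff.2 hz)
  have hnw : ((‖w‖ : ℝ) : ℂ) ≠ 0 := ofReal_ne_zero.2 (norm_ne_zero_iff.2 hw)
  rw [div_eq_div_iff hnz hnw] at h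
  push_cast
  field_simp
  linear_combination h

theorem exists_pos_forall_one_add_mul_pos {ι : Type*} [Finite ι] (s : ι → ℝ) :
    ∃ ε : ℝ, 0 < ε ∧ ∀ i, 0 < 1 + ε * s i := by
  have h : ∀ᶠ ε in nhdsWithin (0 : ℝ) (Set.Ioi 0), ∀ i, 0 < 1 + ε * s i := by
    refine nhdsWithin_le_nhds (Filter.eventually_all.2 fun i => ?_)
    have hc : Continuous fun ε : ℝ => 1 + ε * s i := by fun_prop
    exact continuousAt_const.eventually_lt hc.continuousAt (by simp)
  obtain ⟨ε, hε, hεs⟩ := (h.and self_mem_nhdsWithin).exists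
  exact ⟨ε, hεs, hε⟩

theorem Matrix.rank_add_finrank_ker_mulVecLin {K ι κ : Type*} [Field K] [Fintype κ]
    (M : Matrix ι κ K) :
    M.rank + Module.finrank K (LinearMap.ker M.mulVecLin) = Fintype.card κ := by
  rw [Matrix.rank, LinearMap.finrank_range_add_finrank_ker, Module.finrank_fintype_fun_eq_card]

section realMulVec

variable {ι κ : Type*} [Fintype κ]

def realMulVec (A : Matrix ι κ ℂ) : (κ → ℝ) →ₗ[ℝ] ι → ℂ where
  toFun y := A *ᵥ fun k => (y k : ℂ)
  map_add' y z := by simp only [Pi.add_apply, ofReal_add, ← mulVec_add]; rfl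
  map_smul' c y := by
    ext j
    simp [mulVec, dotProduct, Finset.mul_sum, mul_left_comm]

theorem realMulVec_apply (A : Matrix ι κ ℂ) (y : κ → ℝ) :
    realMulVec A y = A *ᵥ fun k => (y k : ℂ) := rfl

theorem re_realMulVec (A : Matrix ι κ ℂ) (y : κ → ℝ) (j : ι) :
    (realMulVec A y j).re = (A.map re *ᵥ y) j := by
  simp [realMulVec_apply, mulVec, dotProduct, re_sum]

theorem im_realMulVec (A : Matrix ι κ ℂ) (y : κ → ℝ) (j : ι) :
    (realMulVec A y j).im = (A.map im *ᵥ y) j := by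
  simp [realMulVec_apply, mulVec, dotProduct, im_sum]

theorem realMulVec_injective_of_rank_eq {A : Matrix ι κ ℂ}
    (hA : (fromRows (A.map re) (A.map im)).rank = Fintype.card κ) :
    Function.Injective (realMulVec A) := by
  have hker := (fromRows (A.map re) (A.map im)).rank_add_finrank_ker_mulVecLin
  rw [hA, Nat.add_eq_left, Submodule.finrank_eq_zero] at hker
  rw [← LinearMap.ker_eq_bot, eq_bot_iff, ← hker]
  intro y hy
  rw [LinearMap.mem_ker] at hy ⊢
  ext (j | j) <;> simp [fromRows_mulVec, ← re_realMulVec, ← im_realMulVec, hy]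

end realMulVec

section trivialKerVec

variable {ι κ : Type*} [DecidableEq ι] [DecidableEq κ]

/-- The kernel vectors of `D_{A,ℝ}(x)` present for every `A`: `(x, -1)`, and `e_j` for each `j`
with `(Ax)_j = 0` (taking `p j := (Ax)_j = 0`). -/
noncomputable def trivialKerVec (x : ι → ℝ) (p : κ → Prop) :
    Option (Subtype p) → ι ⊕ κ → ℝ :=
  fun o => Option.casesOn' o (Sum.elim x (-1)) fun j => Pi.single (Sum.inr j.1) 1

theorem linearIndependent_trivialKerVec {x : ι → ℝ} (hx : x ≠ 0) (p : κ → Prop) :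
    LinearIndependent ℝ (trivialKerVec x p) := by
  refine LinearIndependent.option
    ((Pi.linearIndependent_single_one (ι ⊕ κ) ℝ).comp _
      (Sum.inr_injective.comp Subtype.val_injective)) fun hmem => ?_
  obtain ⟨k, hk⟩ := Function.ne_iff.1 hx
  have hspan : Submodule.span ℝ (Set.range fun j : Subtype p => Pi.single (Sum.inr j.1) (1 : ℝ))
      ≤ LinearMap.ker (LinearMap.proj (R := ℝ) (φ := fun _ : ι ⊕ κ => ℝ) (Sum.inl k)) :=
    Submodule.span_le.2 <| Set.range_subset_iff.2 fun j => by simp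
  exact hk (hspan hmem)

theorem finrank_span_trivialKerVec {x : ι → ℝ} (hx : x ≠ 0) (p : κ → Prop)
    [Fintype (Subtype p)] :
    Module.finrank ℝ (Submodule.span ℝ (Set.range (trivialKerVec x p)))
      = Fintype.card (Subtype p) + 1 := by
  rw [finrank_span_eq_card (linearIndependent_trivialKerVec hx p), Fintype.card_option]

theorem trivialKerVec_some_comp_inl (x : ι → ℝ) {p : κ → Prop} (j : Subtype p) :
    trivialKerVec x p (some j) ∘ Sum.inl = 0 := by
  ext
  simp [trivialKerVec]

theorem trivialKerVec_comp_inl_mem (x : ι → ℝ) (p : κ → Prop) (o : Option (Subtype p)) :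
    trivialKerVec x p o ∘ Sum.inl ∈ ℝ ∙ x := by
  rcases o with _ | j
  · simp [trivialKerVec, Submodule.mem_span_singleton_self x]
  · simp [trivialKerVec_some_comp_inl]

end trivialKerVec

section discDR

variable {m d : ℕ} {A : Matrix (Fin m) (Fin d) ℂ} {x : Fin d → ℝ}

theorem mem_span_singleton_of_mem_WsetR (hW : x ∈ WsetR A) {y : Fin d → ℝ} {s : Fin m → ℝ}
    (hy : ∀ j, realMulVec A y j = s j * realMulVec A x j) : y ∈ ℝ ∙ x := by
  obtain ⟨ε, hε, hεs⟩ := exists_pos_forall_one_add_mul_pos s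
  have hsign : ∀ j, csign (realMulVec A (x + ε • y) j) = csign (realMulVec A x j) := by
    refine fun j => csign_eq_csign_iff.2 ⟨1 + ε * s j, hεs j, ?_⟩
    rw [map_add, map_smul, Pi.add_apply, Pi.smul_apply, hy, real_smul]
    push_cast
    ring
  obtain ⟨t, -, ht⟩ := hW _ hsign
  refine Submodule.mem_span_singleton.2 ⟨(t - 1) / ε, funext fun k => ?_⟩
  have hk := congrFun ht k
  simp only [Pi.add_apply, Pi.smul_apply, smul_eq_mul] at hk ⊢
  field_simp
  linarith

theorem mem_WsetR_of_forall_mem_span_singleton (hx : realMulVec A x ≠ 0)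
    (h : ∀ (y : Fin d → ℝ) (s : Fin m → ℝ),
      (∀ j, realMulVec A y j = s j * realMulVec A x j) → y ∈ ℝ ∙ x) :
    x ∈ WsetR A := by
  intro y hy
  choose t ht hty using fun j => csign_eq_csign_iff.1 (hy j)
  obtain ⟨c, rfl⟩ := Submodule.mem_span_singleton.1 (h y t hty)
  obtain ⟨j, hj⟩ := Function.ne_iff.1 hx
  have hc : c = t j := by
    have hcj : realMulVec A (c • x) j = t j * realMulVec A x j := hty j
    rw [map_smul, Pi.smul_apply, real_smul] at hcj
    exact_mod_cast mul_right_cancel₀ hj hcj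
  exact ⟨c, hc ▸ ht j, rfl⟩

theorem discDR_mulVec_inl (v : Fin d ⊕ Fin m → ℝ) (j : Fin m) :
    (discDR A x *ᵥ v) (Sum.inl j)
      = (realMulVec A (v ∘ Sum.inl) j + v (Sum.inr j) * realMulVec A x j).re := by
  simp [discDR, fromBlocks_mulVec, re_realMulVec, mulVec_diagonal, ← realMulVec_apply, mul_comm]

theorem discDR_mulVec_inr (v : Fin d ⊕ Fin m → ℝ) (j : Fin m) :
    (discDR A x *ᵥ v) (Sum.inr j)
      = (realMulVec A (v ∘ Sum.inl) j + v (Sum.inr j) * realMulVec A x j).im := by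
  simp [discDR, fromBlocks_mulVec, im_realMulVec, mulVec_diagonal, ← realMulVec_apply, mul_comm]

theorem mem_ker_discDR_iff {v : Fin d ⊕ Fin m → ℝ} :
    v ∈ LinearMap.ker (discDR A x).mulVecLin ↔
      ∀ j, realMulVec A (v ∘ Sum.inl) j
        = ((-v (Sum.inr j) : ℝ) : ℂ) * realMulVec A x j := by
  simp only [LinearMap.mem_ker, mulVecLin_apply, funext_iff, Sum.forall, discDR_mulVec_inl,
    discDR_mulVec_inr, Pi.zero_apply, ← forall_and, ofReal_neg, neg_mul, eq_neg_iff_add_eq_zero,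
    Complex.ext_iff, zero_re, zero_im]

theorem trivialKerVec_mem_ker_discDR (o : Option {j // realMulVec A x j = 0}) :
    trivialKerVec x (fun j => realMulVec A x j = 0) o
      ∈ LinearMap.ker (discDR A x).mulVecLin := by
  rw [mem_ker_discDR_iff]
  intro j
  rcases o with _ | ⟨j', hj'⟩
  · simp [trivialKerVec]
  · rw [trivialKerVec_some_comp_inl, map_zero]
    by_cases hjj : j = j'
    · simp [hjj, hj']
    · simp [trivialKerVec, hjj]

theorem ker_discDR_inf_comap_eq_span :
    LinearMap.ker (discDR A x).mulVecLin ⊓ (ℝ ∙ x).comap (LinearMap.funLeft ℝ ℝ Sum.inl)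
      = Submodule.span ℝ (Set.range (trivialKerVec x fun j => realMulVec A x j = 0)) := by
  set S := Submodule.span ℝ (Set.range (trivialKerVec x fun j => realMulVec A x j = 0))
  refine le_antisymm ?_ (Submodule.span_le.2 <| Set.range_subset_iff.2 fun o =>
    ⟨trivialKerVec_mem_ker_discDR o, trivialKerVec_comp_inl_mem x _ o⟩)
  rintro v ⟨hvK, hvx⟩
  obtain ⟨c, hc⟩ := Submodule.mem_span_singleton.1 hvx
  change c • x = v ∘ Sum.inl at hc
  set w := v - c • trivialKerVec x (fun j => realMulVec A x j = 0) none
  suffices hw : w ∈ S by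
    simpa [w] using S.add_mem hw (S.smul_mem c (Submodule.subset_span ⟨none, rfl⟩))
  rw [pi_eq_sum_univ' w]
  refine S.sum_mem fun i _ => ?_
  rcases i with k | j
  · have hck : c * x k = v (Sum.inl k) := congrFun hc k
    have hk : w (Sum.inl k) = 0 := by simp [w, trivialKerVec, ← hck]
    simp [hk]
  by_cases hj : realMulVec A x j = 0
  · exact S.smul_mem _ (Submodule.subset_span ⟨some ⟨j, hj⟩, rfl⟩)
  · have hcj := mem_ker_discDR_iff.1 hvK j
    rw [← hc, map_smul, Pi.smul_apply, real_smul] at hcj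
    have hvj : c = -v (Sum.inr j) := by exact_mod_cast mul_right_cancel₀ hj hcj
    have hj' : w (Sum.inr j) = 0 := by simp [w, trivialKerVec, hvj]
    simp [hj']

theorem ker_discDR_le_comap_iff (hx : x ≠ 0) :
    LinearMap.ker (discDR A x).mulVecLin
        ≤ (ℝ ∙ x).comap (LinearMap.funLeft ℝ ℝ Sum.inl) ↔
      Module.finrank ℝ (LinearMap.ker (discDR A x).mulVecLin)
        = Fintype.card {j // realMulVec A x j = 0} + 1 := by
  rw [← inf_eq_left, ker_discDR_inf_comap_eq_span, ← finrank_span_trivialKerVec hx]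
  refine ⟨fun h => h ▸ rfl, fun h => Submodule.eq_of_le_of_finrank_eq ?_ h.symm⟩
  exact ker_discDR_inf_comap_eq_span (A := A) ▸ inf_le_left

theorem mem_WsetR_iff_ker_discDR_le (hx : realMulVec A x ≠ 0) :
    x ∈ WsetR A ↔
      LinearMap.ker (discDR A x).mulVecLin
        ≤ (ℝ ∙ x).comap (LinearMap.funLeft ℝ ℝ Sum.inl) := by
  refine ⟨fun hW v hv => mem_span_singleton_of_mem_WsetR hW (mem_ker_discDR_iff.1 hv),
    fun h => mem_WsetR_of_forall_mem_span_singleton hx fun y s hy => ?_⟩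
  have hv : Sum.elim y (-s) ∈ LinearMap.ker (discDR A x).mulVecLin :=
    mem_ker_discDR_iff.2 fun j => by simp [hy]
  exact h hv

end discDR

theorem stmt_19 (m d : ℕ) (A : Matrix (Fin m) (Fin d) ℂ)
    (hA : (Matrix.fromRows (A.map Complex.re) (A.map Complex.im)).rank = d)
    (x : Fin d → ℝ) (hx : x ≠ 0) :
    x ∈ WsetR A ↔
      (discDR A x).rank =
        d + Fintype.card {j : Fin m // A.mulVec (fun k => (x k : ℂ)) j ≠ 0} - 1 := by
  have hAx : realMulVec A x ≠ 0 :=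
    (map_ne_zero_iff _ (realMulVec_injective_of_rank_eq (hA.trans (Fintype.card_fin d).symm))).2 hx
  obtain ⟨j, hj⟩ := Function.ne_iff.1 hAx
  have hsupp := Fintype.card_subtype_lt (p := fun j => realMulVec A x j = 0) hj
  have hrank := (discDR A x).rank_add_finrank_ker_mulVecLin
  simp only [Fintype.card_sum, Fintype.card_fin] at hrank hsupp
  change _ ↔ _ = d + Fintype.card {j // realMulVec A x j ≠ 0} - 1
  rw [Fintype.card_subtype_compl, Fintype.card_fin, mem_WsetR_iff_ker_discDR_le hAx,
    ker_discDR_le_comap_iff hx]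
  omega
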